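/- Let W be a vector space with transversal lagrangian subspaces L_W, C_W ⊆ W ⊕ W*, let J : V → W be linear, let L ⊆ V ⊕ V* be lagrangian making J a strong Dirac map onto (W, L_W), and let C ⊆ V ⊕ V* be the backward image of C_W under J. Then C is a lagrangian subspace transversal to L: V ⊕ V* = L ⊕ C. -/

import Mathlib

/-!
A vector orthogonal to both `L` and `C` is orthogonal to every `(v, J*γ)`, because each such
vector lies in `L + C`: split `(J v, γ) = (J u, δ) + (Z, β)` along `W ⊕ W* = L_W ⊕ C_W` with
`(u, J*δ) ∈ L` (strong Dirac), so that `Z = J (v - u)` and `(v - u, J*β) ∈ C`. Orthogonality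
to all `(v, J*γ)` forces the vector to have the form `(X, 0)` with `J X = 0`, so the strong
Dirac condition kills it if it lies in `L`. Since `L` is lagrangian, this gives
`(L + C)^⊥ = 0`, i.e. `L + C = V ⊕ V*`; isotropy of `C` (inherited from `C_W`) then yields
`L ∩ C = 0` and that `C` is lagrangian.
-/

/-- The backward image of `C_W` under `J`. -/
def backwardImage {V W : Type*} [AddCommGroup V] [Module ℝ V] [AddCommGroup W] [Module ℝ W]
    (J : V →ₗ[ℝ] W) (CW : Submodule ℝ (W × Module.Dual ℝ W)) :
    Set (V × Module.Dual ℝ V) :=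
  {p | ∃ (X : V) (β : Module.Dual ℝ W), p = (X, J.dualMap β) ∧ (J X, β) ∈ CW}

open Module

section Pairing

variable {K V W : Type*} [Field K] [AddCommGroup V] [Module K V] [AddCommGroup W] [Module K W]

variable (K V) in
noncomputable def pairForm : LinearMap.BilinForm K (V × Dual K V) :=
  LinearMap.mk₂ K (fun p q => q.2 p.1 + p.2 q.1)
    (by intros; simp only [Prod.fst_add, Prod.snd_add, map_add, LinearMap.add_apply]; ring)
    (by intros; simp only [Prod.smul_fst, Prod.smul_snd, map_smul, LinearMap.smul_apply,
          smul_eq_mul]; ring)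
    (by intros; simp only [Prod.fst_add, Prod.snd_add, map_add, LinearMap.add_apply]; ring)
    (by intros; simp only [Prod.smul_fst, Prod.smul_snd, map_smul, LinearMap.smul_apply,
          smul_eq_mul]; ring)

@[simp]
theorem pairForm_apply (p q : V × Dual K V) : pairForm K V p q = q.2 p.1 + p.2 q.1 := rfl

theorem pairForm_comm (p q : V × Dual K V) : pairForm K V p q = pairForm K V q p :=
  add_comm _ _

theorem pairForm_mk_dualMap (J : V →ₗ[K] W) (X Y : V) (β γ : Dual K W) :
    pairForm K V (X, J.dualMap β) (Y, J.dualMap γ) = pairForm K W (J X, β) (J Y, γ) := rfl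

theorem pairForm_isRefl : (pairForm K V).IsRefl := fun p q h => by
  rwa [pairForm_comm]

theorem pairForm_nondegenerate : (pairForm K V).Nondegenerate := by
  refine (pairForm_isRefl (K := K) (V := V)).nondegenerate_iff_separatingLeft.2 fun p h =>
    Prod.ext ?_ ?_
  · exact (forall_dual_apply_eq_zero_iff K p.1).1 fun φ => by simpa using h (0, φ)
  · ext v
    simpa using h (v, 0)

def IsLagrangian (U : Submodule K (V × Dual K V)) : Prop :=
  ∀ x, x ∈ U ↔ ∀ y ∈ U, pairForm K V x y = 0

theorem IsLagrangian.pairForm_eq_zero {U : Submodule K (V × Dual K V)} (hU : IsLagrangian U)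
    {x y : V × Dual K V} (hx : x ∈ U) (hy : y ∈ U) : pairForm K V x y = 0 :=
  (hU x).1 hx y hy

theorem eq_top_of_forall_pairForm_eq_zero [FiniteDimensional K V] {U : Submodule K (V × Dual K V)}
    (h : ∀ r, (∀ u ∈ U, pairForm K V r u = 0) → r = 0) : U = ⊤ := by
  have hperp : (pairForm K V).orthogonal U = ⊥ :=
    (Submodule.eq_bot_iff _).2 fun r hr =>
      h r fun u hu => by rw [pairForm_comm]; exact hr u hu
  rw [← LinearMap.BilinForm.orthogonal_orthogonal pairForm_nondegenerate pairForm_isRefl U, hperp,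
    LinearMap.BilinForm.orthogonal_bot]

theorem IsLagrangian.sup_eq_top [FiniteDimensional K V] {U U' : Submodule K (V × Dual K V)}
    (hU : IsLagrangian U) (h : ∀ r ∈ U, (∀ c ∈ U', pairForm K V r c = 0) → r = 0) :
    U ⊔ U' = ⊤ :=
  eq_top_of_forall_pairForm_eq_zero fun r hr =>
    h r ((hU r).2 fun u hu => hr u (Submodule.mem_sup_left hu))
      fun c hc => hr c (Submodule.mem_sup_right hc)

theorem IsLagrangian.sup_eq_top_of_inf_eq_bot [FiniteDimensional K V]
    {U U' : Submodule K (V × Dual K V)} (hU : IsLagrangian U) (hU' : IsLagrangian U')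
    (h : U ⊓ U' = ⊥) : U ⊔ U' = ⊤ :=
  hU.sup_eq_top fun r hr hrU' => by
    have hr' : r ∈ U ⊓ U' := ⟨hr, (hU' r).2 hrU'⟩
    rwa [h, Submodule.mem_bot] at hr'

theorem isLagrangian_of_sup_eq_top {U U' : Submodule K (V × Dual K V)}
    (hsup : U ⊔ U' = ⊤) (hiso : ∀ x ∈ U', ∀ y ∈ U', pairForm K V x y = 0)
    (h : ∀ r ∈ U, (∀ c ∈ U', pairForm K V r c = 0) → r = 0) : IsLagrangian U' := by
  refine fun x => ⟨fun hx y hy => hiso x hx y hy, fun hx => ?_⟩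
  obtain ⟨l, hl, c, hc, rfl⟩ := Submodule.mem_sup.1 (Submodule.eq_top_iff'.1 hsup x)
  have hl0 : l = 0 := h l hl fun c' hc' => by
    have := hx c' hc'
    rwa [map_add, LinearMap.add_apply, hiso c hc c' hc', add_zero] at this
  simpa [hl0] using hc

theorem eq_zero_of_forall_pairForm_mk_dualMap (J : V →ₗ[K] W) {p : V × Dual K V}
    (h : ∀ v γ, pairForm K V p (v, J.dualMap γ) = 0) : p.2 = 0 ∧ J p.1 = 0 := by
  refine ⟨LinearMap.ext fun v => by simpa using h v 0, ?_⟩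
  exact (forall_dual_apply_eq_zero_iff K (J p.1)).1 fun γ => by simpa using h 0 γ

end Pairing

section BackwardImage

variable {V W : Type*} [AddCommGroup V] [Module ℝ V] [AddCommGroup W] [Module ℝ W]
  {J : V →ₗ[ℝ] W} {L : Submodule ℝ (V × Dual ℝ V)} {LW CW : Submodule ℝ (W × Dual ℝ W)}

variable (J CW) in
def backwardImageSubmodule : Submodule ℝ (V × Dual ℝ V) where
  carrier := backwardImage J CW
  add_mem' := by
    rintro _ _ ⟨X₁, β₁, rfl, h₁⟩ ⟨X₂, β₂, rfl, h₂⟩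
    exact ⟨X₁ + X₂, β₁ + β₂, by simp, by simpa using CW.add_mem h₁ h₂⟩
  zero_mem' := ⟨0, 0, by simp [Prod.ext_iff], by rw [map_zero]; exact CW.zero_mem⟩
  smul_mem' := by
    rintro a _ ⟨X, β, rfl, h⟩
    exact ⟨a • X, a • β, by simp, by simpa using CW.smul_mem a h⟩

theorem pairForm_eq_zero_of_mem_backwardImage (hCW : IsLagrangian CW)
    {p q : V × Dual ℝ V} (hp : p ∈ backwardImage J CW) (hq : q ∈ backwardImage J CW) :
    pairForm ℝ V p q = 0 := by
  obtain ⟨X, β, rfl, hX⟩ := hp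
  obtain ⟨Y, γ, rfl, hY⟩ := hq
  rw [pairForm_mk_dualMap]
  exact hCW.pairForm_eq_zero hX hY

theorem mk_dualMap_mem_sup_backwardImage
    (hfwd : ∀ q ∈ LW, ∃ X β, q = (J X, β) ∧ (X, J.dualMap β) ∈ L) (hsup : LW ⊔ CW = ⊤)
    (v : V) (γ : Dual ℝ W) : (v, J.dualMap γ) ∈ L ⊔ backwardImageSubmodule J CW := by
  obtain ⟨_, hl, c, hc, hlc⟩ := Submodule.mem_sup.1 (Submodule.eq_top_iff'.1 hsup (J v, γ))
  obtain ⟨u, δ, rfl, hu⟩ := hfwd _ hl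
  have hc' : c = (J (v - u), γ - δ) := by
    rw [eq_sub_of_add_eq' hlc]
    ext <;> simp
  refine Submodule.mem_sup.2 ⟨_, hu, _, ⟨v - u, γ - δ, rfl, hc' ▸ hc⟩, ?_⟩
  ext <;> simp

theorem eq_zero_of_mem_of_forall_pairForm_backwardImage (hL : IsLagrangian L)
    (hfwd : ∀ q ∈ LW, ∃ X β, q = (J X, β) ∧ (X, J.dualMap β) ∈ L) (hsup : LW ⊔ CW = ⊤)
    (hker : ∀ X, J X = 0 → (X, 0) ∈ L → X = 0) {p : V × Dual ℝ V} (hp : p ∈ L)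
    (hpC : ∀ c ∈ backwardImage J CW, pairForm ℝ V p c = 0) : p = 0 := by
  have hperp : L ⊔ backwardImageSubmodule J CW ≤ LinearMap.ker (pairForm ℝ V p) :=
    sup_le (fun q hq => hL.pairForm_eq_zero hp hq) hpC
  obtain ⟨hp₂, hJp₁⟩ := eq_zero_of_forall_pairForm_mk_dualMap J fun v γ =>
    hperp (mk_dualMap_mem_sup_backwardImage hfwd hsup v γ)
  obtain ⟨x, ξ⟩ := p
  obtain rfl : ξ = 0 := hp₂
  rw [hker x hJp₁ hp]
  rfl

end BackwardImage

/-- If `J` is a strong Dirac map onto `(W, L_W)` and `C_W` is a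
lagrangian complement to `L_W`, then the backward image `C` of `C_W` is a
lagrangian subspace transversal to `L`: `V ⊕ V* = L ⊕ C`. -/
theorem backward_image_transversal {V W : Type*}
    [AddCommGroup V] [Module ℝ V] [FiniteDimensional ℝ V]
    [AddCommGroup W] [Module ℝ W] [FiniteDimensional ℝ W]
    (J : V →ₗ[ℝ] W)
    (L : Submodule ℝ (V × Module.Dual ℝ V))
    (LW CW : Submodule ℝ (W × Module.Dual ℝ W))
    (hL : ∀ x : V × Module.Dual ℝ V, x ∈ L ↔ ∀ y ∈ L, y.2 x.1 + x.2 y.1 = 0)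
    (hLW : ∀ x : W × Module.Dual ℝ W, x ∈ LW ↔ ∀ y ∈ LW, y.2 x.1 + x.2 y.1 = 0)
    (hCW : ∀ x : W × Module.Dual ℝ W, x ∈ CW ↔ ∀ y ∈ CW, y.2 x.1 + x.2 y.1 = 0)
    (htrans : LW ⊓ CW = ⊥)
    (hfwd : ∀ q : W × Module.Dual ℝ W,
        q ∈ LW ↔ ∃ (X : V) (β : Module.Dual ℝ W), q = (J X, β) ∧ (X, J.dualMap β) ∈ L)
    (hker : ∀ X : V, J X = 0 → (X, (0 : Module.Dual ℝ V)) ∈ L → X = 0) :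
    (∀ p : V × Module.Dual ℝ V,
        p ∈ backwardImage J CW ↔ ∀ q ∈ backwardImage J CW, q.2 p.1 + p.2 q.1 = 0) ∧
    (∀ p ∈ backwardImage J CW, p ∈ L → p = 0) ∧
    (∀ p : V × Module.Dual ℝ V, ∃ l ∈ L, ∃ c ∈ backwardImage J CW, p = l + c) := by
  set C := backwardImageSubmodule J CW
  have hCiso : ∀ p ∈ C, ∀ q ∈ C, pairForm ℝ V p q = 0 := fun _ hp _ hq =>
    pairForm_eq_zero_of_mem_backwardImage hCW hp hq
  have hLWCW : LW ⊔ CW = ⊤ := IsLagrangian.sup_eq_top_of_inf_eq_bot hLW hCW htrans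
  have hLC : ∀ p ∈ L, (∀ c ∈ C, pairForm ℝ V p c = 0) → p = 0 := fun _ hp =>
    eq_zero_of_mem_of_forall_pairForm_backwardImage hL (fun q => (hfwd q).1) hLWCW hker hp
  have hsup : L ⊔ C = ⊤ := IsLagrangian.sup_eq_top hL hLC
  refine ⟨isLagrangian_of_sup_eq_top hsup hCiso hLC, fun p hpC hpL => hLC p hpL (hCiso p hpC),
    fun p => ?_⟩
  obtain ⟨l, hl, c, hc, rfl⟩ := Submodule.mem_sup.1 (Submodule.eq_top_iff'.1 hsup p)
  exact ⟨l, hl, c, hc, rfl⟩
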